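/- Let Λ be a nonempty finite set, ψ : Λ → ℝ a function, and let ψ_min < ψ_max be real numbers. Let ψ̄ ∈ [ψ_min, ψ_max] be a real number (the cell mean). For each x ∈ Λ define α(x) := 1 if ψ(x) = ψ̄, and α(x) := min{ 1, |(ψ̄ − ψ_min)/(ψ̄ − ψ(x))|, |(ψ̄ − ψ_max)/(ψ̄ − ψ(x))| } otherwise, and set α := min_{x ∈ Λ} α(x). Then α ∈ [0,1], and the scaled values ψ̂(x) := α(ψ(x) − ψ̄) + ψ̄ satisfy ψ_min ≤ ψ̂(x) ≤ ψ_max for every x ∈ Λ. -/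
import Mathlib


/-- Bound preservation of the element-local (Zhang–Shu type) scaling limiter:
if the cell mean `ψbar` lies in `[ψmin, ψmax]`, then the scaling factor
`α := min_{x ∈ Λ} α(x)` lies in `[0,1]` and the scaled values
`ψ̂(x) = α(ψ(x) − ψbar) + ψbar` all lie in `[ψmin, ψmax]`. -/
theorem scaling_limiter_bound_preservation
    {X : Type*} (Λ : Finset X) (hΛ : Λ.Nonempty)
    (ψ : X → ℝ) (ψmin ψmax ψbar : ℝ) (hlt : ψmin < ψmax)
    (hbar : ψbar ∈ Set.Icc ψmin ψmax) :
    let αf : X → ℝ := fun x =>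
      if ψ x = ψbar then 1
      else min 1 (min |(ψbar - ψmin) / (ψbar - ψ x)| |(ψbar - ψmax) / (ψbar - ψ x)|)
    let α : ℝ := Λ.inf' hΛ αf
    α ∈ Set.Icc (0 : ℝ) 1 ∧
      ∀ x ∈ Λ, ψmin ≤ α * (ψ x - ψbar) + ψbar ∧ α * (ψ x - ψbar) + ψbar ≤ ψmax := by
  intro αf α
  obtain ⟨hb1, hb2⟩ := hbar
  have h0 : ∀ x, 0 ≤ αf x := by
    intro x
    simp only [αf]
    split
    · norm_num
    · exact le_min zero_le_one (le_min (abs_nonneg _) (abs_nonneg _))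
  have h1 : ∀ x, αf x ≤ 1 := by
    intro x
    simp only [αf]
    split
    · exact le_refl 1
    · exact min_le_left _ _
  have hα0 : 0 ≤ α := Finset.le_inf' hΛ _ fun x _ => h0 x
  have hα1 : α ≤ 1 := by
    obtain ⟨x, hx⟩ := hΛ
    exact le_trans (Finset.inf'_le _ hx) (h1 x)
  refine ⟨⟨hα0, hα1⟩, fun x hx => ?_⟩
  have hαx : α ≤ αf x := Finset.inf'_le _ hx
  have key : |α * (ψ x - ψbar)| ≤ ψbar - ψmin ∧ |α * (ψ x - ψbar)| ≤ ψmax - ψbar := by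
    rw [abs_mul, abs_of_nonneg hα0]
    by_cases h : ψ x = ψbar
    · simp [h]; constructor <;> linarith
    · have hne : ψbar - ψ x ≠ 0 := sub_ne_zero.mpr (Ne.symm h)
      have habs : |ψ x - ψbar| = |ψbar - ψ x| := abs_sub_comm _ _
      have hfx : αf x = min 1 (min |(ψbar - ψmin) / (ψbar - ψ x)| |(ψbar - ψmax) / (ψbar - ψ x)|) := by
        simp [αf, h]
      constructor
      · calc α * |ψ x - ψbar| ≤ αf x * |ψ x - ψbar| :=
              mul_le_mul_of_nonneg_right hαx (abs_nonneg _)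
          _ ≤ |(ψbar - ψmin) / (ψbar - ψ x)| * |ψbar - ψ x| := by
              rw [habs]
              exact mul_le_mul_of_nonneg_right
                (hfx ▸ le_trans (min_le_right _ _) (min_le_left _ _)) (abs_nonneg _)
          _ = |ψbar - ψmin| := by rw [← abs_mul, div_mul_cancel₀ _ hne]
          _ = ψbar - ψmin := abs_of_nonneg (by linarith)
      · calc α * |ψ x - ψbar| ≤ αf x * |ψ x - ψbar| :=
              mul_le_mul_of_nonneg_right hαx (abs_nonneg _)
          _ ≤ |(ψbar - ψmax) / (ψbar - ψ x)| * |ψbar - ψ x| := by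
              rw [habs]
              exact mul_le_mul_of_nonneg_right
                (hfx ▸ le_trans (min_le_right _ _) (min_le_right _ _)) (abs_nonneg _)
          _ = |ψbar - ψmax| := by rw [← abs_mul, div_mul_cancel₀ _ hne]
          _ = ψmax - ψbar := by rw [abs_sub_comm]; exact abs_of_nonneg (by linarith)
  obtain ⟨k1, k2⟩ := key
  have hle := le_abs_self (α * (ψ x - ψbar))
  have hge := neg_abs_le (α * (ψ x - ψbar))
  constructor <;> linarith
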